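/- For any finite simple graph G, the smallest exponent appearing with nonzero coefficient in q(G) equals k(G), the number of connected components of G (assuming G has at least one vertex). -/

import Mathlib

/-- The pair `x, y` lies in different classes among (neighbors of `a` only,
neighbors of `b` only, neighbors of both), with both distinct from `a` and `b`. -/
def togglePair {V : Type} (G : SimpleGraph V) (a b x y : V) : Prop :=
  (x ≠ a ∧ x ≠ b ∧ y ≠ a ∧ y ≠ b) ∧
  (G.Adj a x ∨ G.Adj b x) ∧ (G.Adj a y ∨ G.Adj b y) ∧
  ¬((G.Adj a x ↔ G.Adj a y) ∧ (G.Adj b x ↔ G.Adj b y))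

lemma togglePair_comm {V : Type} (G : SimpleGraph V) (a b x y : V) :
    togglePair G a b x y ↔ togglePair G a b y x := by
  unfold togglePair; tauto

/-- The pivot `G^{ab}`: toggle the adjacency of every pair of vertices (distinct
from `a`, `b`) lying in different classes among (neighbors of `a` only,
neighbors of `b` only, neighbors of both); all other adjacencies unchanged. -/
def pivot {V : Type} (G : SimpleGraph V) (a b : V) : SimpleGraph V where
  Adj x y := (togglePair G a b x y ∧ x ≠ y ∧ ¬ G.Adj x y) ∨
    (¬ togglePair G a b x y ∧ G.Adj x y)
  symm := by
    constructor
    intro x y h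
    rcases h with ⟨ht, hxy, hna⟩ | ⟨ht, ha⟩
    · exact Or.inl ⟨(togglePair_comm G a b x y).mp ht, hxy.symm,
        fun h => hna h.symm⟩
    · exact Or.inr ⟨fun h => ht ((togglePair_comm G a b y x).mp h), ha.symm⟩
  loopless := by
    constructor
    intro x h
    rcases h with ⟨_, hxy, _⟩ | ⟨_, ha⟩
    · exact hxy rfl
    · exact G.ne_of_adj ha rfl

/-- Deletion of the vertex `a` from `G`. -/
def delVert {V : Type} (G : SimpleGraph V) (a : V) : SimpleGraph {v : V // v ≠ a} :=
  G.comap (fun v => v.1)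

/-- `q` is an interlace polynomial map: invariant under graph isomorphism,
satisfying the pivot-deletion recursion `q(G) = q(G-a) + q(G^{ab}-b)` for every
edge `ab`, and equal to `x^n` on the edgeless graph on `n` vertices. -/
def IsInterlacePoly
    (q : ∀ (V : Type) [Fintype V] [DecidableEq V], SimpleGraph V → Polynomial ℤ) : Prop :=
  (∀ (V W : Type) [Fintype V] [DecidableEq V] [Fintype W] [DecidableEq W]
      (G : SimpleGraph V) (H : SimpleGraph W), Nonempty (G ≃g H) → q V G = q W H) ∧
  (∀ (V : Type) [Fintype V] [DecidableEq V] (G : SimpleGraph V) (a b : V), G.Adj a b →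
      q V G = q {v : V // v ≠ a} (delVert G a) +
        q {v : V // v ≠ b} (delVert (pivot G a b) b)) ∧
  (∀ (V : Type) [Fintype V] [DecidableEq V],
      q V (⊥ : SimpleGraph V) = Polynomial.X ^ (Fintype.card V))

open SimpleGraph Polynomial

section Aux

variable {V : Type}

lemma togglePair_ne {G : SimpleGraph V} {a b x y : V} (h : togglePair G a b x y) : x ≠ y := by
  rintro rfl
  exact h.2.2.2 ⟨Iff.rfl, Iff.rfl⟩

lemma delVert_adj {G : SimpleGraph V} {c : V} {x y : {v : V // v ≠ c}} :
    (delVert G c).Adj x y ↔ G.Adj x.1 y.1 := Iff.rfl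

lemma pivot_adj {G : SimpleGraph V} {a b x y : V} :
    (pivot G a b).Adj x y ↔ ((togglePair G a b x y ∧ x ≠ y ∧ ¬ G.Adj x y) ∨
      (¬ togglePair G a b x y ∧ G.Adj x y)) := Iff.rfl

lemma pivot_adj_of_not_toggle {G : SimpleGraph V} {a b x y : V}
    (h : ¬ togglePair G a b x y) : (pivot G a b).Adj x y ↔ G.Adj x y := by
  rw [pivot_adj]
  constructor
  · rintro (⟨ht, _, _⟩ | ⟨_, h2⟩)
    · exact absurd ht h
    · exact h2
  · intro h2; exact Or.inr ⟨h, h2⟩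

lemma pivot_adj_of_toggle {G : SimpleGraph V} {a b x y : V}
    (ht : togglePair G a b x y) (hn : ¬ G.Adj x y) : (pivot G a b).Adj x y :=
  pivot_adj.2 (Or.inl ⟨ht, togglePair_ne ht, hn⟩)

lemma reachable_of_pivot_adj {G : SimpleGraph V} {a b x y : V} (hab : G.Adj a b)
    (h : (pivot G a b).Adj x y) : G.Reachable x y := by
  rcases pivot_adj.1 h with ⟨ht, _, _⟩ | ⟨_, h2⟩
  · have hx : G.Reachable x a := by
      rcases ht.2.1 with h' | h'
      · exact h'.symm.reachable
      · exact h'.symm.reachable.trans hab.symm.reachable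
    have hy : G.Reachable a y := by
      rcases ht.2.2.1 with h' | h'
      · exact h'.reachable
      · exact hab.reachable.trans h'.reachable
    exact hx.trans hy
  · exact h2.reachable

/-- Lifting a walk avoiding `c` to `delVert G c`. -/
lemma reachable_delVert {G : SimpleGraph V} {c : V} {u v : V} (p : G.Walk u v)
    (hp : ∀ w ∈ p.support, w ≠ c) (hu : u ≠ c) (hv : v ≠ c) :
    (delVert G c).Reachable ⟨u, hu⟩ ⟨v, hv⟩ := by
  induction p with
  | nil => exact Reachable.refl _
  | @cons u w v h p ih =>
    have hw : w ≠ c := hp w (by simp [SimpleGraph.Walk.support_cons])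
    refine Reachable.trans (Adj.reachable ?_) (ih (fun z hz => hp z (by simp [SimpleGraph.Walk.support_cons, hz])) hw hv)
    exact (delVert_adj (x := ⟨u, hu⟩) (y := ⟨w, hw⟩)).2 h

lemma reachable_of_del_reachable {G : SimpleGraph V} {c : V} {K : SimpleGraph {v : V // v ≠ c}}
    (h1 : ∀ x y, K.Adj x y → G.Reachable x.1 y.1) {x y : {v : V // v ≠ c}}
    (h : K.Reachable x y) : G.Reachable x.1 y.1 := by
  obtain ⟨p⟩ := h
  induction p with
  | nil => exact Reachable.refl _
  | cons h p ih => exact (h1 _ _ h).trans ih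

/-- The induced map on connected components. -/
noncomputable def compMap {G : SimpleGraph V} {c : V} (K : SimpleGraph {v : V // v ≠ c})
    (h1 : ∀ x y, K.Adj x y → G.Reachable x.1 y.1) :
    K.ConnectedComponent → G.ConnectedComponent :=
  ConnectedComponent.lift (fun v => G.connectedComponentMk v.1)
    (fun _ _ p _ => ConnectedComponent.sound (reachable_of_del_reachable h1 ⟨p⟩))

lemma compMap_surjective {G : SimpleGraph V} {c : V} (K : SimpleGraph {v : V // v ≠ c})
    (h1 : ∀ x y, K.Adj x y → G.Reachable x.1 y.1)
    (d : V) (hd : d ≠ c) (hdc : G.Reachable c d) :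
    Function.Surjective (compMap K h1) := by
  intro C
  induction C using SimpleGraph.ConnectedComponent.ind with
  | _ v =>
    by_cases hv : v = c
    · subst hv
      exact ⟨K.connectedComponentMk ⟨d, hd⟩, ConnectedComponent.sound hdc.symm⟩
    · exact ⟨K.connectedComponentMk ⟨v, hv⟩, rfl⟩

lemma compMap_injective {G : SimpleGraph V} {c : V} (K : SimpleGraph {v : V // v ≠ c})
    (h1 : ∀ x y, K.Adj x y → G.Reachable x.1 y.1)
    (h2 : ∀ x y : {v : V // v ≠ c}, G.Reachable x.1 y.1 → K.Reachable x y) :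
    Function.Injective (compMap K h1) := by
  intro C D
  induction C using SimpleGraph.ConnectedComponent.ind with
  | _ x =>
    induction D using SimpleGraph.ConnectedComponent.ind with
    | _ y =>
      intro h
      exact ConnectedComponent.sound (h2 x y (ConnectedComponent.exact h))

lemma card_cc_le [Finite V] {G : SimpleGraph V} {c : V} (K : SimpleGraph {v : V // v ≠ c})
    (h1 : ∀ x y, K.Adj x y → G.Reachable x.1 y.1)
    (d : V) (hd : d ≠ c) (hdc : G.Reachable c d) :
    Nat.card G.ConnectedComponent ≤ Nat.card K.ConnectedComponent :=
  Nat.card_le_card_of_surjective (compMap K h1) (compMap_surjective K h1 d hd hdc)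

lemma card_cc_eq {G : SimpleGraph V} {c : V} (K : SimpleGraph {v : V // v ≠ c})
    (h1 : ∀ x y, K.Adj x y → G.Reachable x.1 y.1)
    (h2 : ∀ x y : {v : V // v ≠ c}, G.Reachable x.1 y.1 → K.Reachable x y)
    (d : V) (hd : d ≠ c) (hdc : G.Reachable c d) :
    Nat.card K.ConnectedComponent = Nat.card G.ConnectedComponent :=
  Nat.card_eq_of_bijective (compMap K h1)
    ⟨compMap_injective K h1 h2, compMap_surjective K h1 d hd hdc⟩

/-- Case 1 of the dichotomy: every vertex in the component of `a` (other than `a`)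
can reach `b` in `G - a`. -/
lemma case1 [DecidableEq V] {G : SimpleGraph V} {a b : V} (hab : G.Adj a b)
    (hc : ∀ w (hw : w ≠ a), G.Reachable w a →
      (delVert G a).Reachable ⟨w, hw⟩ ⟨b, hab.ne'⟩)
    (x y : {v : V // v ≠ a}) (hR : G.Reachable x.1 y.1) :
    (delVert G a).Reachable x y := by
  obtain ⟨x, hx⟩ := x
  obtain ⟨y, hy⟩ := y
  by_cases hxa : G.Reachable x a
  · exact (hc x hx hxa).trans (hc y hy (hR.symm.trans hxa)).symm
  · obtain ⟨p⟩ := hR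
    have hsup : ∀ w ∈ p.support, w ≠ a := by
      intro w hw hwa
      subst hwa
      exact hxa ⟨p.takeUntil w hw⟩
    exact reachable_delVert p hsup hx hy

/-- Finding a pendant-side vertex adjacent to `a` that cannot reach `b` in `G - a`. -/
lemma exists_r' {G : SimpleGraph V} {a b : V} (hab : G.Adj a b) :
    ∀ {r u : V} (_ : G.Walk r u), u = a → ∀ (hr : r ≠ a),
      ¬ (delVert G a).Reachable ⟨r, hr⟩ ⟨b, hab.ne'⟩ →
      ∃ (r' : V) (hr' : r' ≠ a), G.Adj a r' ∧
        ¬ (delVert G a).Reachable ⟨r', hr'⟩ ⟨b, hab.ne'⟩ := by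
  intro r u p
  induction p with
  | nil => intro hu hr _; exact absurd hu hr
  | @cons r w u h p ih =>
    intro hu hr hnr
    by_cases hwa : w = a
    · subst hwa
      exact ⟨r, hr, h.symm, hnr⟩
    · refine ih hu hwa (fun hcon => hnr (Reachable.trans ?_ hcon))
      exact (Adj.reachable ((delVert_adj (x := ⟨r, hr⟩) (y := ⟨w, hwa⟩)).2 h))

/-- The hub lemma: if `r'` is adjacent to `a`, not adjacent to `b`, and not adjacent
to any neighbor of `b` (other than `a`), then every vertex reaching `a` in `G`
(other than `b`) reaches `a` in `pivot G a b - b`. -/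
lemma hub {G : SimpleGraph V} {a b r' : V} (hab : G.Adj a b)
    (hA : G.Adj a r') (hr'b : r' ≠ b) (hnb : ¬ G.Adj b r')
    (hsep : ∀ x, G.Adj b x → x ≠ a → ¬ G.Adj r' x) :
    ∀ {v u : V} (_ : G.Walk v u), u = a → ∀ (hv : v ≠ b),
      (delVert (pivot G a b) b).Reachable ⟨v, hv⟩ ⟨a, hab.ne⟩ := by
  intro v u p
  induction p with
  | nil =>
    rintro rfl hv
    exact Reachable.refl _
  | @cons v w u hvw q ih =>
    intro hu hv
    by_cases hva : v = a
    · subst hva; exact Reachable.refl _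
    by_cases hav : G.Adj a v
    · have hH : (pivot G a b).Adj v a :=
        (pivot_adj_of_not_toggle (fun ht => ht.1.2.2.1 rfl)).2 hav.symm
      exact Adj.reachable ((delVert_adj (x := ⟨v, hv⟩) (y := ⟨a, hab.ne⟩)).2 hH)
    by_cases hbv : G.Adj b v
    · have hr'a : r' ≠ a := hA.ne'
      have ht : togglePair G a b r' v :=
        ⟨⟨hr'a, hr'b, hva, hv⟩, Or.inl hA, Or.inr hbv,
          fun hiff => hnb (hiff.2.mpr hbv)⟩
      have h1 : (pivot G a b).Adj r' v := pivot_adj_of_toggle ht (hsep v hbv hva)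
      have h2 : (pivot G a b).Adj a r' :=
        (pivot_adj_of_not_toggle (fun ht' => ht'.1.1 rfl)).2 hA
      refine Reachable.trans
        (Adj.reachable ((delVert_adj (x := ⟨v, hv⟩) (y := ⟨r', hr'b⟩)).2 h1.symm))
        (Adj.reachable ((delVert_adj (x := ⟨r', hr'b⟩) (y := ⟨a, hab.ne⟩)).2 h2.symm))
    · -- far vertex
      have hwb : w ≠ b := fun h => hbv (by rw [h] at hvw; exact hvw.symm)
      have hnt : ¬ togglePair G a b v w := by
        rintro ⟨_, hvN, _, _⟩
        rcases hvN with h' | h'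
        · exact hav h'
        · exact hbv h'
      have hH : (pivot G a b).Adj v w := (pivot_adj_of_not_toggle hnt).2 hvw
      exact Reachable.trans
        (Adj.reachable ((delVert_adj (x := ⟨v, hv⟩) (y := ⟨w, hwb⟩)).2 hH))
        (ih hu hwb)

/-- Lifting a walk that stays away from `a`, `b` and their neighborhoods. -/
lemma reachable_del_pivot_far {G : SimpleGraph V} {a b : V} {u v : V} (p : G.Walk u v)
    (hp : ∀ w ∈ p.support, ¬ G.Adj a w ∧ ¬ G.Adj b w ∧ w ≠ b)
    (hu : u ≠ b) (hv : v ≠ b) :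
    (delVert (pivot G a b) b).Reachable ⟨u, hu⟩ ⟨v, hv⟩ := by
  induction p with
  | nil => exact Reachable.refl _
  | @cons u w v h p ih =>
    have hw := hp w (by simp [SimpleGraph.Walk.support_cons])
    have hu' := hp u (by simp [SimpleGraph.Walk.support_cons])
    have hnt : ¬ togglePair G a b u w := by
      rintro ⟨_, huN, _, _⟩
      rcases huN with h' | h'
      · exact hu'.1 h'
      · exact hu'.2.1 h'
    have hH : (pivot G a b).Adj u w := (pivot_adj_of_not_toggle hnt).2 h
    refine Reachable.trans (Adj.reachable ((delVert_adj (x := ⟨u, hu⟩) (y := ⟨w, hw.2.2⟩)).2 hH))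
      (ih (fun z hz => hp z (by simp [SimpleGraph.Walk.support_cons, hz])) hw.2.2 hv)

/-- Case 2: the component of `a` stays connected in `pivot G a b - b`. -/
lemma case2 [DecidableEq V] {G : SimpleGraph V} {a b r' : V} (hab : G.Adj a b)
    (hA : G.Adj a r') (hr'b : r' ≠ b) (hnb : ¬ G.Adj b r')
    (hsep : ∀ x, G.Adj b x → x ≠ a → ¬ G.Adj r' x)
    (x y : {v : V // v ≠ b}) (hR : G.Reachable x.1 y.1) :
    (delVert (pivot G a b) b).Reachable x y := by
  obtain ⟨x, hx⟩ := x
  obtain ⟨y, hy⟩ := y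
  by_cases hxa : G.Reachable x a
  · obtain ⟨px⟩ := hxa
    obtain ⟨py⟩ := hR.symm.trans ⟨px⟩
    exact (hub hab hA hr'b hnb hsep px rfl hx).trans (hub hab hA hr'b hnb hsep py rfl hy).symm
  · obtain ⟨p⟩ := hR
    have hsup : ∀ w ∈ p.support, ¬ G.Adj a w ∧ ¬ G.Adj b w ∧ w ≠ b := by
      intro w hw
      have hxw : G.Reachable x w := ⟨p.takeUntil w hw⟩
      refine ⟨fun h => hxa (hxw.trans h.symm.reachable), fun h => hxa
        (hxw.trans (h.symm.reachable.trans hab.symm.reachable)), fun h => hxa ?_⟩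
      subst h
      exact hxw.trans hab.symm.reachable
    exact reachable_del_pivot_far p hsup hx hy

lemma components_ineq [Finite V] (G : SimpleGraph V) {a b : V} (hab : G.Adj a b) :
    Nat.card G.ConnectedComponent ≤ Nat.card (delVert G a).ConnectedComponent ∧
    Nat.card G.ConnectedComponent ≤
      Nat.card (delVert (pivot G a b) b).ConnectedComponent := by
  constructor
  · exact card_cc_le _ (fun x y h => (delVert_adj.1 h).reachable) b hab.ne' hab.reachable
  · exact card_cc_le _ (fun x y h => reachable_of_pivot_adj hab (delVert_adj.1 h))
      a hab.ne hab.symm.reachable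

lemma components_dichotomy [DecidableEq V] (G : SimpleGraph V) {a b : V} (hab : G.Adj a b) :
    Nat.card (delVert G a).ConnectedComponent = Nat.card G.ConnectedComponent ∨
    Nat.card (delVert (pivot G a b) b).ConnectedComponent =
      Nat.card G.ConnectedComponent := by
  by_cases hc : ∀ w (hw : w ≠ a), G.Reachable w a →
      (delVert G a).Reachable (⟨w, hw⟩ : {v : V // v ≠ a}) ⟨b, hab.ne'⟩
  · left
    exact card_cc_eq _ (fun x y h => (delVert_adj.1 h).reachable)
      (fun x y h => case1 hab hc x y h) b hab.ne' hab.reachable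
  · right
    push_neg at hc
    obtain ⟨r, hr, hrR, hnr⟩ := hc
    obtain ⟨pw⟩ := hrR
    obtain ⟨r', hr'a, hA, hnr'⟩ := exists_r' hab pw rfl hr hnr
    have hA' := hA.symm
    have hr'b : r' ≠ b := by
      rintro rfl
      exact hnr' (Reachable.refl _)
    have hnb : ¬ G.Adj b r' := by
      intro h
      exact hnr' (Adj.reachable ((delVert_adj (x := ⟨r', hr'a⟩) (y := ⟨b, hab.ne'⟩)).2 h.symm))
    have hsep : ∀ x, G.Adj b x → x ≠ a → ¬ G.Adj r' x := by
      intro x hbx hxa hr'x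
      refine hnr' (Reachable.trans
        (Adj.reachable ((delVert_adj (x := ⟨r', hr'a⟩) (y := ⟨x, hxa⟩)).2 hr'x))
        (Adj.reachable ((delVert_adj (x := ⟨x, hxa⟩) (y := ⟨b, hab.ne'⟩)).2 hbx.symm)))
    exact card_cc_eq _ (fun x y h => reachable_of_pivot_adj hab (delVert_adj.1 h))
      (fun x y h => case2 hab hA hr'b hnb hsep x y h) a hab.ne hab.symm.reachable

lemma card_cc_bot [Fintype V] :
    Nat.card (⊥ : SimpleGraph V).ConnectedComponent = Fintype.card V := by
  have e : (⊥ : SimpleGraph V).ConnectedComponent ≃ V :=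
    { toFun := ConnectedComponent.lift id
        (fun v w p _ => reachable_bot.1 ⟨p⟩)
      invFun := (⊥ : SimpleGraph V).connectedComponentMk
      left_inv := by
        intro C
        induction C using SimpleGraph.ConnectedComponent.ind with
        | _ v => rfl
      right_inv := fun v => rfl }
  rw [Nat.card_congr e, Nat.card_eq_fintype_card]

lemma bot_of_no_adj (G : SimpleGraph V) (h : ∀ a b : V, ¬ G.Adj a b) :
    G = ⊥ := by
  ext x y
  simp [h x y]

lemma trailing_key {p r : Polynomial ℤ} {s t : ℕ}
    (hp : p.natTrailingDegree = s) (hp' : 0 < p.coeff s)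
    (hr : r.natTrailingDegree = t) (hr' : 0 < r.coeff t) :
    (p + r).natTrailingDegree = min s t ∧ 0 < (p + r).coeff (min s t) := by
  have key : 0 < (p + r).coeff (min s t) := by
    rw [coeff_add]
    rcases lt_trichotomy s t with h | h | h
    · have h0 : r.coeff s = 0 :=
        coeff_eq_zero_of_lt_natTrailingDegree (by rw [hr]; omega)
      rw [min_eq_left h.le, h0, add_zero]; exact hp'
    · subst h
      rw [min_self]
      positivity
    · have h0 : p.coeff t = 0 :=
        coeff_eq_zero_of_lt_natTrailingDegree (by rw [hp]; omega)
      rw [min_eq_right h.le, h0, zero_add]; exact hr'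
  refine ⟨le_antisymm (natTrailingDegree_le_of_ne_zero key.ne') (le_natTrailingDegree ?_ ?_), key⟩
  · intro h0
    rw [h0] at key
    simp at key
  · intro m hm
    rw [coeff_add, coeff_eq_zero_of_lt_natTrailingDegree (by omega),
      coeff_eq_zero_of_lt_natTrailingDegree (by omega), add_zero]

lemma card_subtype_ne [Fintype V] [DecidableEq V] (a : V) :
    Fintype.card {v : V // v ≠ a} = Fintype.card V - 1 := by
  have : Fintype.card {v : V // ¬ v = a} = Fintype.card V - Fintype.card {v : V // v = a} :=
    Fintype.card_subtype_compl _
  rw [Fintype.card_subtype_eq] at this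
  exact this

lemma main_induction
    (q : ∀ (V : Type) [Fintype V] [DecidableEq V], SimpleGraph V → Polynomial ℤ)
    (hq : IsInterlacePoly q) :
    ∀ (n : ℕ) (V : Type) [Fintype V] [DecidableEq V], Fintype.card V = n →
    ∀ G : SimpleGraph V,
      (q V G).natTrailingDegree = Nat.card G.ConnectedComponent ∧
      0 < (q V G).coeff (Nat.card G.ConnectedComponent) := by
  intro n
  induction n with
  | zero =>
    intro V _ _ hV G
    have hG : G = ⊥ := by
      have : IsEmpty V := Fintype.card_eq_zero_iff.mp hV
      exact bot_of_no_adj G (fun a _ _ => this.elim a)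
    rw [hG, hq.2.2, card_cc_bot, hV]
    simp [coeff_X_pow]
  | succ n ih =>
    intro V _ _ hV G
    by_cases hE : ∃ a b, G.Adj a b
    · obtain ⟨a, b, hab⟩ := hE
      have hrec := hq.2.1 V G a b hab
      have hcard1 : Fintype.card {v : V // v ≠ a} = n := by
        rw [card_subtype_ne, hV]; omega
      have hcard2 : Fintype.card {v : V // v ≠ b} = n := by
        rw [card_subtype_ne, hV]; omega
      obtain ⟨h1, h1'⟩ := ih _ hcard1 (delVert G a)
      obtain ⟨h2, h2'⟩ := ih _ hcard2 (delVert (pivot G a b) b)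
      have hineq := components_ineq G hab
      have hdich := components_dichotomy G hab
      have hmin : min (Nat.card (delVert G a).ConnectedComponent)
          (Nat.card (delVert (pivot G a b) b).ConnectedComponent) =
          Nat.card G.ConnectedComponent := by omega
      obtain ⟨A, B⟩ := trailing_key h1 h1' h2 h2'
      rw [hrec]
      rw [A, hmin] at *
      rw [hmin] at B
      exact ⟨rfl, B⟩
    · push_neg at hE
      have hG : G = ⊥ := bot_of_no_adj G hE
      rw [hG, hq.2.2, card_cc_bot]
      simp [coeff_X_pow]

end Aux

theorem interlacePoly_trailingDegree_eq_card_components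
    (q : ∀ (V : Type) [Fintype V] [DecidableEq V], SimpleGraph V → Polynomial ℤ)
    (hq : IsInterlacePoly q)
    {V : Type} [Fintype V] [DecidableEq V] [Nonempty V] (G : SimpleGraph V) :
    (q V G).natTrailingDegree = Nat.card G.ConnectedComponent :=
  (main_induction q hq (Fintype.card V) V rfl G).1
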